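/- Define ρ_α̂(X,Y) := α̂(X)∘α̂(Y) − α̂(Y)∘α̂(X) − α̂([X,Y]) ∈ End(𝔤) for X,Y ∈ 𝔥, and let H be the smallest linear subspace of End(𝔤) containing all ρ_α̂(X,Y) and satisfying α̂(Z)∘T − T∘α̂(Z) ∈ H for every Z ∈ 𝔥 and T ∈ H. Then every T ∈ H annihilates the image of α: T(α(Y)) = 0 for all Y ∈ 𝔥. (Hence, via Wang's holonomy formula, the fundamental vector fields of the group action are infinitesimal automorphisms of the homogeneous Cartan geometry.) -/
import Mathlib


/-- **The holonomy algebra of the modified connection `α̂` annihilates the image of `α`.**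
With `𝔥`, `𝔤`, `𝔨`, `𝔭`, `α`, `ᾱ`, `ρ̄`, `π`, `α̂` as in the homogeneous Cartan geometry
setting, define `ρ_α̂(X,Y) = α̂(X)∘α̂(Y) − α̂(Y)∘α̂(X) − α̂(⁅X,Y⁆)` and let `H` be the
smallest linear subspace of `End(𝔤)` containing all `ρ_α̂(X,Y)` and stable under
`T ↦ α̂(Z)∘T − T∘α̂(Z)` for all `Z ∈ 𝔥`.  Then every `T ∈ H` satisfies `T(α(Y)) = 0`
for all `Y ∈ 𝔥`: the fundamental vector fields are infinitesimal automorphisms. -/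
theorem holonomy_annihilates_image_of_alpha
    (𝔥 𝔤 : Type*) [LieRing 𝔥] [LieAlgebra ℝ 𝔥] [LieRing 𝔤] [LieAlgebra ℝ 𝔤]
    (𝔨 : LieSubalgebra ℝ 𝔥) (𝔭 : LieSubalgebra ℝ 𝔤)
    (α : 𝔥 →ₗ[ℝ] 𝔤)
    (hα1 : ∀ Z ∈ 𝔨, α Z ∈ 𝔭)
    (hα2 : ∀ Z ∈ 𝔨, ∀ X : 𝔥, α ⁅Z, X⁆ = ⁅α Z, α X⁆)
    (αbar : (𝔥 ⧸ 𝔨.toSubmodule) ≃ₗ[ℝ] (𝔤 ⧸ 𝔭.toSubmodule))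
    (hαbar : ∀ X : 𝔥, αbar (Submodule.Quotient.mk X) = Submodule.Quotient.mk (α X))
    (ρbar : (𝔥 ⧸ 𝔨.toSubmodule) →ₗ[ℝ] (𝔥 ⧸ 𝔨.toSubmodule) →ₗ[ℝ] 𝔤)
    (hρbar : ∀ X Y : 𝔥,
      ρbar (Submodule.Quotient.mk X) (Submodule.Quotient.mk Y) = ⁅α X, α Y⁆ - α ⁅X, Y⁆)
    (π : 𝔤 → 𝔥 ⧸ 𝔨.toSubmodule)
    (hπ : ∀ v : 𝔤, π v = αbar.symm (Submodule.Quotient.mk v))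
    (αhat : 𝔥 → 𝔤 →ₗ[ℝ] 𝔤)
    (hαhat : ∀ (X : 𝔥) (v : 𝔤), αhat X v = ⁅α X, v⁆ + ρbar (π v) (Submodule.Quotient.mk X))
    (H : Submodule ℝ (𝔤 →ₗ[ℝ] 𝔤))
    (hHρ : ∀ X Y : 𝔥, αhat X ∘ₗ αhat Y - αhat Y ∘ₗ αhat X - αhat ⁅X, Y⁆ ∈ H)
    (hHinv : ∀ Z : 𝔥, ∀ T ∈ H, αhat Z ∘ₗ T - T ∘ₗ αhat Z ∈ H)
    (hHmin : ∀ N : Submodule ℝ (𝔤 →ₗ[ℝ] 𝔤),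
      (∀ X Y : 𝔥, αhat X ∘ₗ αhat Y - αhat Y ∘ₗ αhat X - αhat ⁅X, Y⁆ ∈ N) →
      (∀ Z : 𝔥, ∀ T ∈ N, αhat Z ∘ₗ T - T ∘ₗ αhat Z ∈ N) → H ≤ N) :
    ∀ T ∈ H, ∀ Y : 𝔥, T (α Y) = 0 := by
  -- Key: α̂(X)(α Y) = α ⁅X, Y⁆
  have key : ∀ X Y : 𝔥, αhat X (α Y) = α ⁅X, Y⁆ := by
    intro X Y
    have hπα : π (α Y) = Submodule.Quotient.mk Y := by
      rw [hπ, ← hαbar, LinearEquiv.symm_apply_apply]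
    rw [hαhat, hπα, hρbar]
    rw [← lie_skew (α Y) (α X)]
    have : α ⁅Y, X⁆ = - α ⁅X, Y⁆ := by rw [← lie_skew Y X, map_neg]
    rw [this]
    abel
  -- The annihilator of the image of α
  set N : Submodule ℝ (𝔤 →ₗ[ℝ] 𝔤) :=
    { carrier := {T | ∀ Y : 𝔥, T (α Y) = 0}
      add_mem' := by intro a b ha hb Y; simp [ha Y, hb Y]
      zero_mem' := by intro Y; simp
      smul_mem' := by intro c a ha Y; simp [ha Y] } with hN
  have hgen : ∀ X Y : 𝔥, αhat X ∘ₗ αhat Y - αhat Y ∘ₗ αhat X - αhat ⁅X, Y⁆ ∈ N := by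
    intro X Y W
    simp only [LinearMap.sub_apply, LinearMap.comp_apply, key]
    rw [lie_lie]
    simp
  have hinv : ∀ Z : 𝔥, ∀ T ∈ N, αhat Z ∘ₗ T - T ∘ₗ αhat Z ∈ N := by
    intro Z T hT W
    simp only [LinearMap.sub_apply, LinearMap.comp_apply, key, hT W, hT ⁅Z, W⁆, map_zero,
      sub_zero, sub_self]
  intro T hT Y
  exact hHmin N hgen hinv hT Y
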